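/- Let γ be a minimal resolution (real or integral) and suppose ω < Σ_{i=0}^k p^i = (p^{k+1}−1)/(p−1). Then ω − γ_0(ω) < Σ_{i=0}^{k−1} p^i. -/

import Mathlib

/-- A resolution of a real `ω ≥ 0`: a sequence `(γ_i)` with values in `{0} ∪ [1, ∞)`
such that `γ_i ≥ p·γ_{i+1}` for all `i` and `Σ γ_i = ω`. -/
def IsResolution (p : ℕ) (ω : ℝ) (γ : ℕ → ℝ) : Prop :=
  (∀ i, γ i = 0 ∨ 1 ≤ γ i) ∧ (∀ i, (p : ℝ) * γ (i + 1) ≤ γ i) ∧ HasSum γ ω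

/-- Lexicographic comparison of sequences: `γ ≤ γ'` iff they are equal or `γ` is
strictly smaller at the first index where they differ. -/
def LexLE (γ γ' : ℕ → ℝ) : Prop :=
  γ = γ' ∨ ∃ i, (∀ j < i, γ j = γ' j) ∧ γ i < γ' i

/-!
The ratio condition `p γ_{i+1} ≤ γ_i` gives `p^i γ_i ≤ γ_0`, and an entry `γ_m ≥ 1` forces
`γ_i ≥ p^(m-i)` for `i ≤ m`, hence `ω ≥ 1 + p + ⋯ + p^m`. So `ω < 1 + p + ⋯ + p^k` confines
the support of `γ` to `{0, …, k}`, and summing `p^k γ_i ≤ p^(k-i) γ_0` there yields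
`p^k ω ≤ γ_0 (1 + ⋯ + p^k)`. Writing `1 + ⋯ + p^k = T + p^k` this is `(ω - γ_0)(T + p^k) ≤ ω T`,
and `ω < T + p^k` turns it into `ω - γ_0 < T`.
-/

open Finset

theorem sum_range_succ_pow_sub {R : Type*} [Semiring R] (x : R) (m : ℕ) :
    ∑ i ∈ range (m + 1), x ^ (m - i) = ∑ i ∈ range (m + 1), x ^ i := by
  rw [← sum_range_reflect]
  refine sum_congr rfl fun i hi => ?_
  have := mem_range.mp hi
  congr 1
  omega

namespace IsResolution

variable {p : ℕ} {ω : ℝ} {γ : ℕ → ℝ}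

theorem nonneg (hres : IsResolution p ω γ) (i : ℕ) : 0 ≤ γ i := by
  rcases hres.1 i with h | h <;> linarith

theorem pow_mul_le (hres : IsResolution p ω γ) (i j : ℕ) : (p : ℝ) ^ j * γ (i + j) ≤ γ i := by
  induction j with
  | zero => simp
  | succ j ih =>
    calc (p : ℝ) ^ (j + 1) * γ (i + (j + 1)) = (p : ℝ) ^ j * (p * γ (i + j + 1)) := by ring_nf
      _ ≤ (p : ℝ) ^ j * γ (i + j) := by gcongr; exact hres.2.1 _
      _ ≤ γ i := ih

theorem pow_le_of_one_le (hres : IsResolution p ω γ) {m : ℕ} (hm : 1 ≤ γ m) {i : ℕ}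
    (hi : i ≤ m) : (p : ℝ) ^ (m - i) ≤ γ i := by
  have h := hres.pow_mul_le i (m - i)
  rw [Nat.add_sub_cancel' hi] at h
  calc (p : ℝ) ^ (m - i) ≤ (p : ℝ) ^ (m - i) * γ m := le_mul_of_one_le_right (by positivity) hm
    _ ≤ γ i := h

theorem geom_sum_le_of_one_le (hres : IsResolution p ω γ) {m : ℕ} (hm : 1 ≤ γ m) :
    ∑ i ∈ range (m + 1), (p : ℝ) ^ i ≤ ω :=
  calc ∑ i ∈ range (m + 1), (p : ℝ) ^ i = ∑ i ∈ range (m + 1), (p : ℝ) ^ (m - i) :=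
        (sum_range_succ_pow_sub _ m).symm
    _ ≤ ∑ i ∈ range (m + 1), γ i :=
        sum_le_sum fun _ hi => hres.pow_le_of_one_le hm (Nat.lt_succ_iff.mp (mem_range.mp hi))
    _ ≤ ω := sum_le_hasSum _ (fun i _ => hres.nonneg i) hres.2.2

theorem eq_zero_of_lt (hres : IsResolution p ω γ) {k : ℕ}
    (hlt : ω < ∑ i ∈ range (k + 1), (p : ℝ) ^ i) {m : ℕ} (hm : k < m) : γ m = 0 := by
  refine (hres.1 m).resolve_right fun h => hlt.not_ge ?_
  calc ∑ i ∈ range (k + 1), (p : ℝ) ^ i ≤ ∑ i ∈ range (m + 1), (p : ℝ) ^ i :=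
        sum_le_sum_of_subset_of_nonneg (range_subset_range.mpr (by omega))
          fun _ _ _ => by positivity
    _ ≤ ω := hres.geom_sum_le_of_one_le h

theorem eq_sum_range_of_lt (hres : IsResolution p ω γ) {k : ℕ}
    (hlt : ω < ∑ i ∈ range (k + 1), (p : ℝ) ^ i) : ω = ∑ i ∈ range (k + 1), γ i :=
  hres.2.2.unique <| hasSum_sum_of_ne_finset_zero fun m hm =>
    hres.eq_zero_of_lt hlt (by simpa using hm)

theorem pow_mul_le_head_mul_geom_sum (hres : IsResolution p ω γ) {k : ℕ}
    (hlt : ω < ∑ i ∈ range (k + 1), (p : ℝ) ^ i) :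
    (p : ℝ) ^ k * ω ≤ γ 0 * ∑ i ∈ range (k + 1), (p : ℝ) ^ i :=
  calc (p : ℝ) ^ k * ω = ∑ i ∈ range (k + 1), (p : ℝ) ^ (k - i) * ((p : ℝ) ^ i * γ i) := by
        rw [hres.eq_sum_range_of_lt hlt, mul_sum]
        refine sum_congr rfl fun i hi => ?_
        rw [← mul_assoc, ← pow_add, Nat.sub_add_cancel (Nat.lt_succ_iff.mp (mem_range.mp hi))]
    _ ≤ ∑ i ∈ range (k + 1), (p : ℝ) ^ (k - i) * γ 0 :=
        sum_le_sum fun i _ => by gcongr; simpa using hres.pow_mul_le 0 i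
    _ = γ 0 * ∑ i ∈ range (k + 1), (p : ℝ) ^ i := by
        rw [← sum_mul, mul_comm, sum_range_succ_pow_sub]

theorem sub_head_lt_geom_sum (hres : IsResolution p ω γ) {k : ℕ} (hk : 0 < k)
    (hlt : ω < ∑ i ∈ range (k + 1), (p : ℝ) ^ i) :
    ω - γ 0 < ∑ i ∈ range k, (p : ℝ) ^ i := by
  have hkey := hres.pow_mul_le_head_mul_geom_sum hlt
  rw [sum_range_succ] at hlt hkey
  set T := ∑ i ∈ range k, (p : ℝ) ^ i
  have hT : 0 < T := sum_pos' (fun _ _ => by positivity) ⟨0, mem_range.mpr hk, by simp⟩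
  have hpk : 0 ≤ (p : ℝ) ^ k := by positivity
  have hS : 0 < T + (p : ℝ) ^ k := by linarith
  refine lt_of_mul_lt_mul_right (a := T + (p : ℝ) ^ k) ?_ hS.le
  calc (ω - γ 0) * (T + (p : ℝ) ^ k) ≤ ω * T := by linarith
    _ < T * (T + (p : ℝ) ^ k) := by rw [mul_comm]; exact mul_lt_mul_of_pos_left hlt hT

end IsResolution

theorem weight_sub_head_lt_general (p : ℕ) (hp : p.Prime) (k : ℕ) (hk : 0 < k)
    (ω : ℝ) (γ : ℕ → ℝ) (hres : IsResolution p ω γ)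
    (hlt : ω < ((p : ℝ) ^ (k + 1) - 1) / ((p : ℝ) - 1)) :
    ω - γ 0 < ((p : ℝ) ^ k - 1) / ((p : ℝ) - 1) := by
  have hp1 : (p : ℝ) ≠ 1 := by exact_mod_cast hp.one_lt.ne'
  rw [← geom_sum_eq hp1] at hlt ⊢
  exact hres.sub_head_lt_geom_sum hk hlt

/-- Let `γ` be a minimal resolution of `ω` and suppose
`ω < Σ_{i=0}^k p^i = (p^{k+1} − 1)/(p − 1)`.  Then
`ω − γ_0(ω) < Σ_{i=0}^{k−1} p^i = (p^k − 1)/(p − 1)`. -/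
theorem weight_sub_head_lt (p : ℕ) (hp : p.Prime) (k : ℕ) (hk : 0 < k)
    (ω : ℝ) (hω : 0 ≤ ω) (γ : ℕ → ℝ) (hres : IsResolution p ω γ)
    (hminimal : ∀ g, IsResolution p ω g → LexLE γ g)
    (hlt : ω < ((p : ℝ) ^ (k + 1) - 1) / ((p : ℝ) - 1)) :
    ω - γ 0 < ((p : ℝ) ^ k - 1) / ((p : ℝ) - 1) :=
  weight_sub_head_lt_general p hp k hk ω γ hres hlt
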